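/- Assume in addition that k is algebraically closed. Equip Λ_n with its ℤ-grading by total degree, and let I ⊆ Λ_n be a homogeneous ideal such that the quotient Λ_n / I is nonzero and has no homogeneous ideals other than the zero ideal and the whole ring. Then there exist nonzero scalars α_1, …, α_n ∈ k such that I = Λ_n ∩ ker(η), where η : R_n → k[t^{±1}] is the k-algebra homomorphism into the Laurent polynomial ring in one variable determined by η(z_i) = α_i t for 1 ≤ i ≤ n. In particular the quotient map sends the power sum p_k to (Σ_{i=1}^n α_i^k) t^k for every k ∈ ℤ. -/

import Mathlib

/-!
Classification of graded-simple quotients of `Λ_n` (`k` algebraically closed):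
if `I` is a homogeneous ideal of `Λ_n` (graded by total degree) with `Λ_n / I` nonzero
and having no homogeneous ideals other than `0` and the whole ring, then there are
nonzero `α_1, …, α_n ∈ k` with `I = Λ_n ∩ ker η`, where `η : R_n → k[t^{±1}]` is the
`k`-algebra homomorphism with `η(z_i) = α_i t`; in particular `η(p_m) = (Σ_i α_i^m) t^m`.
-/

noncomputable section

variable (k : Type) [Field k] [CharZero k] (n : ℕ)

/-- The Laurent polynomial ring in `n` variables over `k`. -/
abbrev Rn : Type := AddMonoidAlgebra k (Fin n → ℤ)

/-- The monomial `z^γ = z_1^{γ_1} ⋯ z_n^{γ_n}`. -/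
def Z (γ : Fin n → ℤ) : Rn k n := AddMonoidAlgebra.single γ 1

/-- Permutation of the exponents, as an additive equivalence of `ℤ^n`. -/
def permAddEquiv (σ : Equiv.Perm (Fin n)) : (Fin n → ℤ) ≃+ (Fin n → ℤ) where
  toFun γ := γ ∘ σ
  invFun γ := γ ∘ σ.symm
  left_inv γ := by funext i; simp
  right_inv γ := by funext i; simp
  map_add' _ _ := rfl

/-- The action of a permutation `σ ∈ S_n` on `R_n` as a `k`-algebra automorphism,
permuting the variables (`z^γ ↦ z^{γ ∘ σ}`). -/
def permAlg (σ : Equiv.Perm (Fin n)) : Rn k n ≃ₐ[k] Rn k n :=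
  AddMonoidAlgebra.domCongr k k (permAddEquiv n σ)

/-- `Λ_n`, the subalgebra of symmetric Laurent polynomials. -/
def SymLaurent : Subalgebra k (Rn k n) where
  carrier := {f | ∀ σ : Equiv.Perm (Fin n), permAlg k n σ f = f}
  mul_mem' := fun {a b} ha hb σ => by rw [map_mul, ha σ, hb σ]
  add_mem' := fun {a b} ha hb σ => by rw [map_add, ha σ, hb σ]
  one_mem' := fun σ => map_one _
  zero_mem' := fun σ => map_zero _
  algebraMap_mem' := fun r σ => (permAlg k n σ).commutes r

/-- The power sum `p_m = z_1^m + ⋯ + z_n^m`. -/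
def psum (m : ℤ) : Rn k n := ∑ i : Fin n, Z k n (Pi.single i m)

/-- The component of total degree `l` of `R_n`. -/
def Deg (l : ℤ) : Submodule k (Rn k n) :=
  Submodule.span k {x : Rn k n | ∃ γ : Fin n → ℤ, (∑ i, γ i) = l ∧ x = Z k n γ}

/-- An ideal of `Λ_n` is homogeneous (for the grading by total degree) iff it is
generated by homogeneous elements. -/
def IsHomog (J : Ideal (SymLaurent k n)) : Prop :=
  ∃ S : Set (SymLaurent k n),
    (∀ s ∈ S, ∃ l : ℤ, (s : Rn k n) ∈ Deg k n l) ∧ J = Ideal.span S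

lemma permAlg_apply (σ : Equiv.Perm (Fin n)) (f : Rn k n) :
    permAlg k n σ f = AddMonoidAlgebra.ofCoeff
      (Finsupp.equivMapDomain (permAddEquiv n σ).toEquiv f.coeff) :=
  AddMonoidAlgebra.ext <| Finsupp.ext fun γ => by
    rw [permAlg, AddMonoidAlgebra.coeff_domCongr]; rfl

lemma permAlg_comp (σ τ : Equiv.Perm (Fin n)) (f : Rn k n) :
    permAlg k n τ (permAlg k n σ f) = permAlg k n (σ * τ) f := by
  simp only [permAlg_apply]
  ext γ
  simp only [AddMonoidAlgebra.coeff_ofCoeff, Finsupp.equivMapDomain_apply]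
  rfl

def Ravg : Rn k n →ₗ[k] Rn k n :=
  (n.factorial : k)⁻¹ • ∑ σ : Equiv.Perm (Fin n), (permAlg k n σ).toLinearMap

lemma Ravg_apply (g : Rn k n) :
    Ravg k n g = (n.factorial : k)⁻¹ • ∑ σ : Equiv.Perm (Fin n), permAlg k n σ g := by
  simp [Ravg, LinearMap.sum_apply]

lemma Ravg_mem (g : Rn k n) : Ravg k n g ∈ SymLaurent k n := by
  intro τ
  rw [Ravg_apply, map_smul, map_sum]
  congr 1
  calc ∑ σ : Equiv.Perm (Fin n), permAlg k n τ (permAlg k n σ g)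
      = ∑ σ : Equiv.Perm (Fin n), permAlg k n (σ * τ) g :=
        Finset.sum_congr rfl fun σ _ => permAlg_comp k n σ τ g
    _ = ∑ σ : Equiv.Perm (Fin n), permAlg k n σ g :=
        Equiv.sum_comp (Equiv.mulRight τ) (fun σ => permAlg k n σ g)

lemma Ravg_mul (g f : Rn k n) (hf : f ∈ SymLaurent k n) :
    Ravg k n (g * f) = Ravg k n g * f := by
  rw [Ravg_apply, Ravg_apply, smul_mul_assoc, Finset.sum_mul]
  congr 1
  refine Finset.sum_congr rfl fun σ _ => ?_
  rw [map_mul, hf σ]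

lemma Ravg_one : Ravg k n 1 = 1 := by
  rw [Ravg_apply]
  simp only [map_one, Finset.sum_const, Finset.card_univ, Fintype.card_perm, Fintype.card_fin]
  rw [← Nat.cast_smul_eq_nsmul k, smul_smul, inv_mul_cancel₀, one_smul]
  exact_mod_cast Nat.factorial_ne_zero n

lemma map_ne_top (I : Ideal (SymLaurent k n)) (hne : I ≠ ⊤) :
    Ideal.map (SymLaurent k n).val I ≠ ⊤ := by
  intro htop
  have h1 : (1 : Rn k n) ∈ Submodule.span (Rn k n) ((SymLaurent k n).val '' I) := by
    have : (1 : Rn k n) ∈ Ideal.map (SymLaurent k n).val I := htop ▸ Submodule.mem_top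
    rwa [Ideal.map, Ideal.span] at this
  obtain ⟨c, hsupp, hsum⟩ := Submodule.mem_span_set.mp h1
  have key : (1 : Rn k n) ∈ (SymLaurent k n).val '' (I : Set (SymLaurent k n)) := by
    have h2 : (1 : Rn k n) = Ravg k n 1 := (Ravg_one k n).symm
    rw [h2, ← hsum, Finsupp.sum, map_sum]
    refine Finset.sum_induction _ (· ∈ (SymLaurent k n).val '' (I : Set (SymLaurent k n)))
      (fun a b ⟨f, hf, hfa⟩ ⟨g, hg, hgb⟩ => ⟨f + g, I.add_mem hf hg, by rw [map_add, hfa, hgb]⟩)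
      ⟨0, I.zero_mem, by simp⟩ fun x hx => ?_
    obtain ⟨f, hfI, hfx⟩ := hsupp hx
    subst hfx
    refine ⟨⟨Ravg k n (c ((SymLaurent k n).val f)), Ravg_mem k n _⟩ * f,
      I.mul_mem_left _ hfI, ?_⟩
    have : (SymLaurent k n).val (⟨Ravg k n (c ((SymLaurent k n).val f)), Ravg_mem k n _⟩ * f)
        = Ravg k n (c ((SymLaurent k n).val f)) * (SymLaurent k n).val f := rfl
    rw [this, smul_eq_mul]
    exact (Ravg_mul k n (c ((SymLaurent k n).val f)) ((SymLaurent k n).val f) f.2).symm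
  obtain ⟨f, hfI, hf1⟩ := key
  have : f = 1 := Subtype.ext hf1
  exact hne (Ideal.eq_top_iff_one I |>.mpr (this ▸ hfI))

-- ### existence of an evaluation vanishing on a proper ideal

instance : AddMonoid.FG (Fin n → ℤ) := by
  have h1 : Module.Finite ℤ (Fin n → ℤ) := inferInstance
  exact AddGroup.fg_iff_addMonoid_fg.mp (Module.Finite.iff_addGroup_fg.mp h1)

lemma exists_phi [IsAlgClosed k] (J : Ideal (Rn k n)) (hJ : J ≠ ⊤) :
    ∃ φ : Rn k n →ₐ[k] k, ∀ x ∈ J, φ x = 0 := by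
  obtain ⟨M, hM, hJM⟩ := Ideal.exists_le_maximal J hJ
  let K := Rn k n ⧸ M
  letI : Field K := Ideal.Quotient.field M
  haveI : Algebra.FiniteType k K :=
    Algebra.FiniteType.of_surjective (Ideal.Quotient.mkₐ k M)
      (Ideal.Quotient.mkₐ_surjective k M)
  haveI : Module.Finite k K := finite_of_finite_type_of_isJacobsonRing k K
  haveI : Algebra.IsIntegral k K := Algebra.IsIntegral.of_finite k K
  have hsurj : Function.Surjective (algebraMap k K) :=
    IsAlgClosed.algebraMap_bijective_of_isIntegral.2
  have hinj : Function.Injective (algebraMap k K) := (algebraMap k K).injective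
  let e : k ≃ₐ[k] K := AlgEquiv.ofBijective (Algebra.ofId k K) ⟨hinj, hsurj⟩
  exact ⟨(e.symm.toAlgHom).comp (Ideal.Quotient.mkₐ k M), fun x hx => by
    simp [show Ideal.Quotient.mkₐ k M x = 0 from Ideal.Quotient.eq_zero_iff_mem.mpr (hJM hx)]⟩

-- ### multiplicativity of monomials

lemma Z_mul (γ δ : Fin n → ℤ) : Z k n γ * Z k n δ = Z k n (γ + δ) := by
  simp [Z, AddMonoidAlgebra.single_mul_single]

lemma Z_zero : Z k n 0 = 1 := rfl

section Phi
variable (φ : Rn k n →ₐ[k] k)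

lemma phiZ_ne (γ : Fin n → ℤ) : φ (Z k n γ) ≠ 0 := by
  intro h
  have : φ (Z k n γ) * φ (Z k n (-γ)) = 1 := by
    rw [← map_mul, Z_mul]
    simp [Z_zero]
  rw [h, zero_mul] at this
  exact zero_ne_one this

lemma phiZ_zsmul (γ : Fin n → ℤ) (m : ℤ) : φ (Z k n (m • γ)) = φ (Z k n γ) ^ m := by
  have hinv : φ (Z k n (-γ)) = (φ (Z k n γ))⁻¹ := by
    have h1 : φ (Z k n (-γ)) * φ (Z k n γ) = 1 := by
      rw [← map_mul, Z_mul]; simp [Z_zero]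
    exact eq_inv_of_mul_eq_one_left h1
  induction m using Int.induction_on with
  | zero => simp [Z_zero]
  | succ i ih =>
      have hstep : ((i : ℤ) + 1) • γ = (i : ℤ) • γ + γ := by rw [add_smul, one_smul]
      rw [hstep, ← Z_mul, map_mul, ih, zpow_add₀ (phiZ_ne k n φ γ), zpow_one]
  | pred i ih =>
      have hstep : (-(i : ℤ) - 1) • γ = (-(i : ℤ)) • γ + -γ := by
        rw [sub_smul, one_smul, sub_eq_add_neg]
      rw [hstep, ← Z_mul, map_mul, ih, hinv, zpow_sub_one₀ (phiZ_ne k n φ γ)]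

-- ### the degree map and the map η

def degS (γ : Fin n → ℤ) : ℤ := ∑ i, γ i

def etaF : Multiplicative (Fin n → ℤ) →* LaurentPolynomial k where
  toFun γ := LaurentPolynomial.C (φ (Z k n γ.toAdd)) * LaurentPolynomial.T (degS n γ.toAdd)
  map_one' := by
    show LaurentPolynomial.C (φ (Z k n 0)) * LaurentPolynomial.T (degS n 0) = 1
    rw [Z_zero, map_one]
    simp [degS]
  map_mul' γ δ := by
    show LaurentPolynomial.C (φ (Z k n (γ.toAdd + δ.toAdd)))
        * LaurentPolynomial.T (degS n (γ.toAdd + δ.toAdd)) = _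
    have h1 : degS n (γ.toAdd + δ.toAdd) = degS n γ.toAdd + degS n δ.toAdd := by
      simp [degS, Finset.sum_add_distrib]
    have h2 : φ (Z k n (γ.toAdd + δ.toAdd)) = φ (Z k n γ.toAdd) * φ (Z k n δ.toAdd) := by
      rw [← Z_mul, map_mul]
    rw [h1, h2, map_mul, LaurentPolynomial.T_add]
    ring

def eta : Rn k n →ₐ[k] LaurentPolynomial k :=
  AddMonoidAlgebra.lift k (LaurentPolynomial k) (Fin n → ℤ) (etaF k n φ)

lemma eta_single (γ : Fin n → ℤ) (a : k) :
    eta k n φ (AddMonoidAlgebra.single γ a)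
      = AddMonoidAlgebra.single (degS n γ) (a * φ (Z k n γ)) := by
  rw [eta, AddMonoidAlgebra.lift_single]
  show a • (LaurentPolynomial.C (φ (Z k n γ)) * LaurentPolynomial.T (degS n γ)) = _
  rw [LaurentPolynomial.single_eq_C_mul_T, map_mul, mul_assoc, Algebra.smul_def,
    LaurentPolynomial.algebraMap_apply]
  simp

lemma eta_Z (γ : Fin n → ℤ) :
    eta k n φ (Z k n γ) = AddMonoidAlgebra.single (degS n γ) (φ (Z k n γ)) := by
  rw [Z, eta_single, one_mul]
  rfl

-- ### evaluation at T = 1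

def eps : LaurentPolynomial k →ₐ[k] k :=
  AddMonoidAlgebra.lift k k ℤ 1

lemma eps_single (m : ℤ) (a : k) : eps k (AddMonoidAlgebra.single m a) = a := by
  rw [eps]
  have := AddMonoidAlgebra.lift_single (R := k) (M := ℤ) (A := k)
    (1 : Multiplicative ℤ →* k) m a
  rw [this]
  simp

lemma eps_eta (x : Rn k n) : eps k (eta k n φ x) = φ x := by
  have : (eps k).comp (eta k n φ) = φ := by
    apply AddMonoidAlgebra.algHom_ext
    intro γ
    show eps k (eta k n φ (AddMonoidAlgebra.single γ 1)) = φ (AddMonoidAlgebra.single γ 1)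
    rw [eta_single, eps_single, one_mul]
    rfl
    exact Subsingleton.elim _ _
  exact DFunLike.congr_fun this x

-- ### η on homogeneous elements

lemma eta_of_Deg {l : ℤ} {x : Rn k n} (hx : x ∈ Deg k n l) :
    eta k n φ x = AddMonoidAlgebra.single l (φ x) := by
  have h : ∃ a : k, eta k n φ x = AddMonoidAlgebra.single l a := by
    refine Submodule.span_induction ?_ ⟨0, by simp⟩ ?_ ?_ hx
    · rintro x ⟨γ, hγ, rfl⟩
      exact ⟨φ (Z k n γ), by rw [eta_Z]; congr 1⟩
    · rintro x y - - ⟨a, ha⟩ ⟨b, hb⟩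
      exact ⟨a + b, by rw [map_add, ha, hb, AddMonoidAlgebra.single_add]⟩
    · rintro c x - ⟨a, ha⟩
      exact ⟨c * a, by rw [map_smul, ha, AddMonoidAlgebra.smul_single, smul_eq_mul]⟩
  obtain ⟨a, ha⟩ := h
  have : a = φ x := by rw [← eps_eta k n φ x, ha, eps_single]
  rw [ha, this]

-- ### homogeneous components

def hcomp (l : ℤ) (f : Rn k n) : Rn k n := AddMonoidAlgebra.ofCoeff (f.coeff.filter (fun γ => degS n γ = l))

lemma hcomp_apply (l : ℤ) (f : Rn k n) (γ : Fin n → ℤ) :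
    (hcomp k n l f).coeff γ = if degS n γ = l then f.coeff γ else 0 := rfl

lemma sum_hcomp (f : Rn k n) :
    ∑ l ∈ f.coeff.support.image (degS n), hcomp k n l f = f := by
  apply AddMonoidAlgebra.ext
  ext γ
  rw [AddMonoidAlgebra.coeff_sum, Finsupp.finset_sum_apply]
  simp only [hcomp_apply]
  rw [Finset.sum_ite_eq (f.coeff.support.image (degS n)) (degS n γ) (fun _ => f.coeff γ)]
  split_ifs with h
  · rfl
  · by_contra hne
    exact h (Finset.mem_image.mpr ⟨γ, Finsupp.mem_support_iff.mpr fun h0 => hne h0.symm, rfl⟩)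

lemma hcomp_mem_Deg (l : ℤ) (f : Rn k n) : hcomp k n l f ∈ Deg k n l := by
  classical
  have hrepr : hcomp k n l f
      = ∑ γ ∈ (hcomp k n l f).coeff.support,
          AddMonoidAlgebra.single γ ((hcomp k n l f).coeff γ) :=
    (AddMonoidAlgebra.sum_coeff_single (hcomp k n l f)).symm
  rw [hrepr]
  refine Submodule.sum_mem _ fun γ hγ => ?_
  have hdeg : degS n γ = l := by
    have := Finsupp.mem_support_iff.mp hγ
    rw [hcomp_apply] at this
    by_contra h
    rw [if_neg h] at this
    exact this rfl
  have : AddMonoidAlgebra.single γ ((hcomp k n l f).coeff γ)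
      = ((hcomp k n l f).coeff γ) • Z k n γ := by
    rw [Z, AddMonoidAlgebra.smul_single, smul_eq_mul, mul_one]
  rw [this]
  exact Submodule.smul_mem _ _ (Submodule.subset_span ⟨γ, hdeg, rfl⟩)

lemma hcomp_mem_Sym (l : ℤ) (f : Rn k n) (hf : f ∈ SymLaurent k n) :
    hcomp k n l f ∈ SymLaurent k n := by
  intro σ
  rw [permAlg_apply]
  ext γ
  rw [AddMonoidAlgebra.coeff_ofCoeff, Finsupp.equivMapDomain_apply]
  have hfγ : f.coeff ((permAddEquiv n σ).toEquiv.symm γ) = f.coeff γ := by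
    have := hf σ
    rw [permAlg_apply] at this
    calc f.coeff ((permAddEquiv n σ).toEquiv.symm γ)
        = (AddMonoidAlgebra.ofCoeff
            (Finsupp.equivMapDomain (permAddEquiv n σ).toEquiv f.coeff)).coeff γ := by
          rw [AddMonoidAlgebra.coeff_ofCoeff, Finsupp.equivMapDomain_apply]
      _ = f.coeff γ := by rw [this]
  have hdγ : degS n ((permAddEquiv n σ).toEquiv.symm γ) = degS n γ := by
    show degS n (γ ∘ σ.symm) = degS n γ
    exact Equiv.sum_comp σ.symm γ
  rw [hcomp_apply, hcomp_apply, hdγ, hfγ]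

section Phi2
variable (φ : Rn k n →ₐ[k] k)

lemma eta_hcomp_zero (f : Rn k n) (hf : eta k n φ f = 0) (l : ℤ) :
    eta k n φ (hcomp k n l f) = 0 := by
  by_cases hl : l ∈ f.coeff.support.image (degS n)
  · have hdecomp := sum_hcomp k n f
    have h0 : (0 : LaurentPolynomial k)
        = ∑ l' ∈ f.coeff.support.image (degS n), AddMonoidAlgebra.single l' (φ (hcomp k n l' f)) := by
      rw [← hf]
      conv_lhs => rw [← hdecomp]
      rw [map_sum]
      exact Finset.sum_congr rfl fun l' _ => eta_of_Deg k n φ (hcomp_mem_Deg k n l' f)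
    have h1 : (0 : k) = φ (hcomp k n l f) := by
      have := congrArg (fun g : LaurentPolynomial k => g.coeff l) h0
      simp only [AddMonoidAlgebra.coeff_zero, Finsupp.coe_zero, Pi.zero_apply] at this
      rw [AddMonoidAlgebra.coeff_sum, Finsupp.finset_sum_apply] at this
      simp only [AddMonoidAlgebra.coeff_single, Finsupp.single_apply] at this
      rwa [Finset.sum_ite_eq' (f.coeff.support.image (degS n)) l (fun l' => φ (hcomp k n l' f)),
        if_pos hl] at this
    rw [eta_of_Deg k n φ (hcomp_mem_Deg k n l f), ← h1, AddMonoidAlgebra.single_zero]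
  · have : hcomp k n l f = 0 := by
      ext γ
      rw [AddMonoidAlgebra.coeff_zero, Finsupp.coe_zero, Pi.zero_apply, hcomp_apply]
      split_ifs with h
      · by_contra hne
        exact hl (Finset.mem_image.mpr ⟨γ, Finsupp.mem_support_iff.mpr hne, h⟩)
      · rfl
    rw [this, map_zero]

end Phi2

end Phi

set_option synthInstance.maxHeartbeats 1000000 in
set_option maxHeartbeats 1000000 in
theorem stmt12 [IsAlgClosed k] (hn : 0 < n)
    (I : Ideal (SymLaurent k n)) (hI : IsHomog k n I)
    (hne : I ≠ ⊤)
    (hsimple : ∀ J : Ideal (SymLaurent k n), IsHomog k n J → I ≤ J → J = I ∨ J = ⊤) :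
    ∃ α : Fin n → k, (∀ i, α i ≠ 0) ∧
      ∃ η : Rn k n →ₐ[k] LaurentPolynomial k,
        (∀ i : Fin n,
          η (Z k n (Pi.single i 1)) = LaurentPolynomial.C (α i) * LaurentPolynomial.T 1) ∧
        (∀ f : SymLaurent k n, f ∈ I ↔ η (f : Rn k n) = 0) ∧
        (∀ m : ℤ, η (psum k n m) =
          LaurentPolynomial.C (∑ i : Fin n, α i ^ m) * LaurentPolynomial.T m) := by
  classical
  obtain ⟨φ, hφ⟩ := exists_phi k n (Ideal.map (SymLaurent k n).val I) (map_ne_top k n I hne)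
  have hdegsingle : ∀ (i : Fin n) (m : ℤ), degS n (Pi.single i m) = m := by
    intro i m
    simp [degS, Pi.single_apply]
  have hαpow : ∀ (i : Fin n) (m : ℤ),
      φ (Z k n (Pi.single i m)) = φ (Z k n (Pi.single i 1)) ^ m := by
    intro i m
    have hsm : Pi.single i m = m • (Pi.single i (1 : ℤ) : Fin n → ℤ) := by
      ext j
      simp [Pi.single_apply]
    rw [hsm, phiZ_zsmul]
  refine ⟨fun i => φ (Z k n (Pi.single i 1)), fun i => phiZ_ne k n φ _, eta k n φ, ?_, ?_, ?_⟩
  · intro i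
    rw [eta_Z, hdegsingle i 1, LaurentPolynomial.single_eq_C_mul_T]
  · -- the membership characterization
    set J' : Ideal (SymLaurent k n) :=
      RingHom.ker ((eta k n φ).comp (SymLaurent k n).val) with hJ'def
    have hmemJ' : ∀ f : SymLaurent k n, f ∈ J' ↔ eta k n φ (f : Rn k n) = 0 := by
      intro f
      rw [hJ'def, RingHom.mem_ker]
      rfl
    have hIJ : I ≤ J' := by
      obtain ⟨S, hS, hIS⟩ := hI
      rw [hIS]
      refine Ideal.span_le.mpr fun s hsS => ?_
      obtain ⟨l, hl⟩ := hS s hsS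
      have hsI : s ∈ I := hIS ▸ Ideal.subset_span hsS
      have hφs : φ ((s : Rn k n)) = 0 :=
        hφ _ (Ideal.mem_map_of_mem (SymLaurent k n).val hsI)
      have : eta k n φ ((s : Rn k n)) = 0 := by
        rw [eta_of_Deg k n φ hl, hφs, AddMonoidAlgebra.single_zero]
      exact (hmemJ' s).mpr this
    have hJ'homog : IsHomog k n J' := by
      refine ⟨{f : SymLaurent k n | f ∈ J' ∧ ∃ l, (f : Rn k n) ∈ Deg k n l},
        fun s hs => hs.2, le_antisymm ?_ ?_⟩
      · -- J' ≤ span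
        intro f hf
        have hηf : eta k n φ ((f : Rn k n)) = 0 := (hmemJ' f).mp hf
        set s : Finset ℤ := (f : Rn k n).coeff.support.image (degS n) with hs
        have hgmem : ∀ l : ℤ, hcomp k n l (f : Rn k n) ∈ SymLaurent k n :=
          fun l => hcomp_mem_Sym k n l _ f.2
        set g : SymLaurent k n := ∑ l ∈ s, ⟨hcomp k n l (f : Rn k n), hgmem l⟩ with hg
        have hfg : f = g := by
          apply Subtype.ext
          have : (g : Rn k n) = ∑ l ∈ s, hcomp k n l (f : Rn k n) := by
            rw [hg, AddSubmonoidClass.coe_finset_sum]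
          rw [this, sum_hcomp]
        rw [hfg, hg]
        refine Submodule.sum_mem _ fun l _ => Ideal.subset_span ?_
        refine ⟨(hmemJ' _).mpr (eta_hcomp_zero k n φ _ hηf l), l, hcomp_mem_Deg k n l _⟩
      · exact Ideal.span_le.mpr fun s hs => hs.1
    have hJ'ne : J' ≠ ⊤ := by
      intro h
      have h1 : (1 : SymLaurent k n) ∈ J' := h ▸ Submodule.mem_top
      have := (hmemJ' 1).mp h1
      rw [OneMemClass.coe_one, map_one] at this
      exact one_ne_zero this
    rcases hsimple J' hJ'homog hIJ with h | h
    · intro f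
      rw [← h]
      exact hmemJ' f
    · exact absurd h hJ'ne
  · -- power sums
    intro m
    rw [psum, map_sum]
    have : ∀ i : Fin n, eta k n φ (Z k n (Pi.single i m))
        = AddMonoidAlgebra.single m (φ (Z k n (Pi.single i 1)) ^ m) := by
      intro i
      rw [eta_Z, hdegsingle i m, hαpow i m]
    rw [Finset.sum_congr rfl fun i _ => this i]
    have h2 : (∑ i : Fin n, (AddMonoidAlgebra.single m (φ (Z k n (Pi.single i 1)) ^ m) : LaurentPolynomial k))
        = AddMonoidAlgebra.single m (∑ i : Fin n, φ (Z k n (Pi.single i 1)) ^ m) :=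
      (map_sum (AddMonoidAlgebra.singleAddHom m) (fun i => φ (Z k n (Pi.single i 1)) ^ m)
        Finset.univ).symm
    rw [h2, LaurentPolynomial.single_eq_C_mul_T]

end
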